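/- Every short linearly ordered set has cardinality at most the continuum 𝔠 = 2^{ℵ₀}. (Urysohn) -/

import Mathlib

/-!
Well-order a short order `S` and define an embedding into an η₁-ordered set `β` by transfinite
recursion: the image of `s` must lie above the images of the earlier points below `s` and below
the images of the earlier points above `s`. As neither `ω₁` nor its reverse embeds into `S`, these
two sets of earlier points have countable cofinal and coinitial subsets, so η₁ provides such a
point. The ultrapower `ℝ*` of `ℝ` over a nonprincipal ultrafilter on `ℕ` is η₁ by a diagonal
argument, and it has at most `𝔠 ^ ℵ₀ = 𝔠` elements.
-/

open Filter Set Cardinal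

/-- A linear order is short if neither `ω₁` nor its reverse order-embeds into it. -/
def IsShort (S : Type*) [LinearOrder S] : Prop :=
  IsEmpty ((Cardinal.aleph.{0} 1).ord.ToType ↪o S) ∧
    IsEmpty ((Cardinal.aleph.{0} 1).ord.ToType ↪o Sᵒᵈ)

theorem Filter.exists_forall_eventually_mem_of_countable {ι α : Type*} [Countable ι]
    [Nonempty α] {l : Filter ℕ} (hl : l ≤ atTop) (X : ι → ℕ → Set α)
    (h : ∀ s : Finset ι, ∀ᶠ k in l, (⋂ i ∈ s, X i k).Nonempty) :
    ∃ g : ℕ → α, ∀ i, ∀ᶠ k in l, g k ∈ X i k := by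
  classical
  cases isEmpty_or_nonempty ι
  · exact ⟨Classical.arbitrary _, isEmptyElim⟩
  obtain ⟨e, he⟩ := exists_surjective_nat ι
  let s (N : ℕ) : Finset ι := (Finset.range N).image e
  -- at stage `k`, honour as many of the first `k` constraints as can be honoured together
  let N (k : ℕ) : ℕ := Nat.findGreatest (fun N ↦ (⋂ i ∈ s N, X i k).Nonempty) k
  refine ⟨fun k ↦ Classical.epsilon (· ∈ ⋂ i ∈ s (N k), X i k), fun i ↦ ?_⟩
  obtain ⟨n, rfl⟩ := he i
  filter_upwards [h (s (n + 1)), hl (eventually_ge_atTop (n + 1))] with k hk hnk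
  have hN : n + 1 ≤ N k := Nat.le_findGreatest hnk hk
  have hne : (⋂ i ∈ s (N k), X i k).Nonempty :=
    Nat.findGreatest_spec (P := fun N ↦ (⋂ i ∈ s N, X i k).Nonempty) hnk hk
  refine mem_iInter₂.1 (Classical.epsilon_spec hne) (e n) ?_
  exact Finset.mem_image_of_mem e (Finset.mem_range.2 (by omega))

def IsEtaOne (β : Type*) [LT β] : Prop :=
  ∀ A B : Set β, A.Countable → B.Countable → (∀ a ∈ A, ∀ b ∈ B, a < b) →
    ∃ x, (∀ a ∈ A, a < x) ∧ ∀ b ∈ B, x < b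

theorem IsEtaOne.nonempty {β : Type*} [LT β] (h : IsEtaOne β) : Nonempty β :=
  let ⟨x, _⟩ := h ∅ ∅ countable_empty countable_empty (by simp)
  ⟨x⟩

theorem Filter.Germ.isEtaOne {α : Type*} [LinearOrder α] [DenselyOrdered α] [NoMinOrder α]
    [NoMaxOrder α] [Nonempty α] {φ : Ultrafilter ℕ} (hφ : (φ : Filter ℕ) ≤ atTop) :
    IsEtaOne (Germ (φ : Filter ℕ) α) := by
  intro A B hA hB hAB
  have : Countable (A ⊕ B) := by
    have := hA.to_subtype; have := hB.to_subtype; infer_instance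
  choose rep hrep using fun x : Germ (φ : Filter ℕ) α ↦ Quot.exists_rep x
  have hrep' (x : Germ (φ : Filter ℕ) α) : (rep x : Germ (φ : Filter ℕ) α) = x := hrep x
  let X : A ⊕ B → ℕ → Set α := Sum.elim (fun a k ↦ Ioi (rep a k)) (fun b k ↦ Iio (rep b k))
  obtain ⟨g, hg⟩ := exists_forall_eventually_mem_of_countable hφ X fun s ↦ by
    have hlt : ∀ᶠ k in (φ : Filter ℕ), ∀ a ∈ s.toLeft, ∀ b ∈ s.toRight, rep a k < rep b k := by
      simp only [Finset.eventually_all]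
      intro a _ b _
      exact Germ.coe_lt.1 (by rw [hrep', hrep']; exact hAB a a.2 b b.2)
    filter_upwards [hlt] with k hk
    obtain ⟨x, hxA, hxB⟩ := Finset.exists_between' (s.toLeft.image fun a : A ↦ rep a k)
      (s.toRight.image fun b : B ↦ rep b k) (by simpa only [Finset.forall_mem_image])
    refine ⟨x, mem_iInter₂.2 fun i hi ↦ ?_⟩
    cases i with
    | inl a => exact hxA _ (Finset.mem_image_of_mem _ (Finset.mem_toLeft.2 hi))
    | inr b => exact hxB _ (Finset.mem_image_of_mem _ (Finset.mem_toRight.2 hi))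
  refine ⟨g, fun a ha ↦ ?_, fun b hb ↦ ?_⟩
  · rw [← hrep' a]; exact Germ.coe_lt.2 (hg (.inl ⟨a, ha⟩))
  · rw [← hrep' b]; exact Germ.coe_lt.2 (hg (.inr ⟨b, hb⟩))

theorem Hyperreal.isEtaOne : IsEtaOne ℝ* := Germ.isEtaOne Nat.hyperfilter_le_atTop

theorem Hyperreal.mk_le_continuum : #ℝ* ≤ 𝔠 := by
  calc #ℝ* ≤ #(ℕ → ℝ) := mk_le_of_surjective ofSeq_surjective
    _ = 𝔠 := by simp [mk_real, continuum_power_aleph0]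

theorem countable_Iio_omega_one (x : (aleph.{0} 1).ord.ToType) : (Iio x).Countable :=
  le_aleph0_iff_set_countable.1 (lt_aleph_one_iff.1 (by simpa using mk_Iio_lt x))

theorem exists_countable_cofinal_subset {S : Type*} [LinearOrder S]
    (h : IsEmpty ((aleph.{0} 1).ord.ToType ↪o S)) (A : Set S) :
    ∃ C ⊆ A, C.Countable ∧ ∀ a ∈ A, ∃ c ∈ C, a ≤ c := by
  by_contra! hA
  obtain ⟨a₀, ha₀, -⟩ := hA ∅ (empty_subset A) countable_empty
  have hub (C : Set S) : ∃ a ∈ A, C ⊆ A → C.Countable → ∀ c ∈ C, c < a := by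
    by_cases hC : C ⊆ A ∧ C.Countable
    · obtain ⟨a, ha, hCa⟩ := hA C hC.1 hC.2
      exact ⟨a, ha, fun _ _ ↦ hCa⟩
    · exact ⟨a₀, ha₀, fun h₁ h₂ ↦ (hC ⟨h₁, h₂⟩).elim⟩
  choose ub hubA hub using hub
  let g : (aleph.{0} 1).ord.ToType → S :=
    WellFoundedLT.fix fun x ih ↦ ub (range fun y : Iio x ↦ ih y y.2)
  have hg (x) : g x = ub (g '' Iio x) := by
    rw [image_eq_range]; exact WellFoundedLT.fix_eq _ x
  have hgmono : StrictMono g := fun y x hyx ↦ by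
    rw [hg x]
    exact hub _ (by rintro _ ⟨z, -, rfl⟩; rw [hg z]; exact hubA _)
      ((countable_Iio_omega_one x).image g) _ (mem_image_of_mem g hyx)
  exact h.elim (OrderEmbedding.ofStrictMono g hgmono)

theorem exists_countable_coinitial_subset {S : Type*} [LinearOrder S]
    (h : IsEmpty ((aleph.{0} 1).ord.ToType ↪o Sᵒᵈ)) (A : Set S) :
    ∃ C ⊆ A, C.Countable ∧ ∀ a ∈ A, ∃ c ∈ C, c ≤ a :=
  exists_countable_cofinal_subset (S := Sᵒᵈ) h A

theorem IsShort.exists_between_image {S β : Type*} [LinearOrder S] [LinearOrder β]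
    (hS : IsShort S) (hβ : IsEtaOne β) {T : Set S} {f : S → β} (hf : StrictMonoOn f T)
    (s : S) : ∃ x, (∀ t ∈ T, t < s → f t < x) ∧ ∀ t ∈ T, s < t → x < f t := by
  obtain ⟨C, hCT, hCc, hC⟩ := exists_countable_cofinal_subset hS.1 (T ∩ Iio s)
  obtain ⟨D, hDT, hDc, hD⟩ := exists_countable_coinitial_subset hS.2 (T ∩ Ioi s)
  obtain ⟨x, hCx, hxD⟩ := hβ (f '' C) (f '' D) (hCc.image f) (hDc.image f) <| by
    rintro _ ⟨c, hc, rfl⟩ _ ⟨d, hd, rfl⟩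
    exact hf (hCT hc).1 (hDT hd).1 ((hCT hc).2.trans (hDT hd).2)
  refine ⟨x, fun t ht hts ↦ ?_, fun t ht hst ↦ ?_⟩
  · obtain ⟨c, hc, htc⟩ := hC t ⟨ht, hts⟩
    exact (hf.monotoneOn ht (hCT hc).1 htc).trans_lt (hCx _ (mem_image_of_mem f hc))
  · obtain ⟨d, hd, hdt⟩ := hD t ⟨ht, hst⟩
    exact (hxD _ (mem_image_of_mem f hd)).trans_le (hf.monotoneOn (hDT hd).1 ht hdt)

theorem strictMonoOn_of_trichotomous {S β : Type*} [LinearOrder S] [Preorder β]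
    (r : S → S → Prop) [Std.Trichotomous r] {f : S → β} {T : Set S}
    (h : ∀ s ∈ T, ∀ t ∈ T, r t s → (t < s → f t < f s) ∧ (s < t → f s < f t)) :
    StrictMonoOn f T := by
  intro a ha b hb hab
  rcases trichotomous_of r a b with hr | rfl | hr
  · exact (h b hb a ha hr).1 hab
  · exact (lt_irrefl a hab).elim
  · exact (h a ha b hb hr).2 hab

theorem IsShort.exists_strictMono {S β : Type*} [LinearOrder S] [LinearOrder β]
    (hS : IsShort S) (hβ : IsEtaOne β) : ∃ f : S → β, StrictMono f := by
  have := hβ.nonempty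
  let r : S → S → Prop := WellOrderingRel
  let f : S → β := IsWellFounded.fix r fun s ih ↦ Classical.epsilon fun x ↦
    (∀ t (ht : r t s), t < s → ih t ht < x) ∧ ∀ t (ht : r t s), s < t → x < ih t ht
  have hf (s) : f s = Classical.epsilon fun x ↦
      (∀ t, r t s → t < s → f t < x) ∧ ∀ t, r t s → s < t → x < f t :=
    IsWellFounded.fix_eq _ _ s
  have key (s) : ∀ t, r t s → (t < s → f t < f s) ∧ (s < t → f s < f t) := by
    induction s using IsWellFounded.induction r with
    | ind s ih =>
      have hmono : StrictMonoOn f {t | r t s} :=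
        strictMonoOn_of_trichotomous r fun a ha b _ hba ↦ ih a ha b hba
      obtain ⟨x, hx⟩ := hS.exists_between_image hβ hmono s
      have hfs := hf s ▸ Classical.epsilon_spec (p := fun x ↦
        (∀ t, r t s → t < s → f t < x) ∧ ∀ t, r t s → s < t → x < f t) ⟨x, hx⟩
      exact fun t ht ↦ ⟨hfs.1 t ht, hfs.2 t ht⟩
  exact ⟨f, strictMonoOn_univ.1 (strictMonoOn_of_trichotomous r fun s _ t _ ↦ key s t)⟩

/-- (Urysohn) Every short linear order has cardinality at most the continuum. -/
theorem card_le_continuum_of_short {S : Type*} [LinearOrder S] (hS : IsShort S) :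
    Cardinal.mk S ≤ Cardinal.continuum := by
  obtain ⟨f, hf⟩ := hS.exists_strictMono Hyperreal.isEtaOne
  have hS_le : lift.{0} #S ≤ lift #ℝ* := lift_mk_le_lift_mk_of_injective hf.injective
  rw [lift_uzero] at hS_le
  exact hS_le.trans (lift_le_continuum.2 Hyperreal.mk_le_continuum)
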